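/- Let q ≥ 1, α > 0, and let n^{(1)}, ..., n^{(w)} be count vectors in ℕ^q each with positive total, and let n = ∑_{t=1}^w n^{(t)} componentwise. Then for any index t* ∈ {1,...,w}: llB(n, α) ≤ llB(n^{(t*)}, α) + ∑_{t ≠ t*} ML(n^{(t)}), where llB(m, α) = -log pGam(α, ∑_k m_k) + ∑_k log pGam(α/q, m_k) and ML(m) = ∑_k m_k log(m_k/∑_l m_l). -/

import Mathlib

/-- `pGam α x = Γ(x+α)/Γ(α)`. -/
noncomputable def pGam (α : ℝ) (x : ℕ) : ℝ := Real.Gamma (x + α) / Real.Gamma α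

/-- Local local BDeu score of a count vector `m` (over `q` categories). -/
noncomputable def llB (q : ℕ) (α : ℝ) (m : ℕ → ℕ) : ℝ :=
  -Real.log (pGam α (∑ k ∈ Finset.range q, m k)) +
    ∑ k ∈ Finset.range q, Real.log (pGam (α / q) (m k))

/-- Maximized multinomial log-likelihood (with `0 · log 0 = 0`). -/
noncomputable def ML (q : ℕ) (m : ℕ → ℕ) : ℝ :=
  ∑ k ∈ Finset.range q,
    (m k : ℝ) * Real.log ((m k : ℝ) / ((∑ l ∈ Finset.range q, m l : ℕ) : ℝ))

/-!
Adding a count vector `b` to `a` changes the BDeu score by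
`∑ₖ log pGam (α/q + aₖ) bₖ - log pGam (α + |a|) |b|`, the log-probability of one particular
sequence of outcomes with counts `b` under a Dirichlet(α/q + aₖ) prior. By de Finetti this is the
Dirichlet average of the multinomial likelihood `∏ₖ θₖ ^ bₖ`, hence at most its maximum
`ML b = ∑ₖ bₖ log (bₖ / |b|)`. The average is handled one category at a time through the Beta
integral, and iterating the one-step bound over the instantiations `t ≠ t'` gives the theorem.
-/

open Real Finset ProbabilityTheory

lemma pow_mul_one_sub_pow_mul_le {t : ℝ} (h0 : 0 ≤ t) (h1 : t ≤ 1) (b c : ℕ) :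
    t ^ b * (1 - t) ^ c * ((b : ℝ) + c) ^ (b + c) ≤ (b : ℝ) ^ b * (c : ℝ) ^ c := by
  rcases Nat.eq_zero_or_pos (b + c) with hB | hB
  · obtain ⟨rfl, rfl⟩ : b = 0 ∧ c = 0 := by omega
    simp
  have h1t : 0 ≤ 1 - t := sub_nonneg.2 h1
  set B : ℝ := (b : ℝ) + c with hB_def
  have hBpos : 0 < B := by rw [hB_def]; exact_mod_cast hB
  have weight_mul_le : ∀ (r : ℕ) {s : ℝ}, 0 ≤ s → r / B * (s * B / r) ≤ s := by
    intro r s hs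
    rcases eq_or_ne (r : ℝ) 0 with hr | hr
    · simp [hr, hs]
    · exact (by field_simp : r / B * (s * B / r) = s).le
  -- weighted AM-GM at the points `t B / b` and `(1 - t) B / c` with weights `b / B` and `c / B`
  have amgm := geom_mean_le_arith_mean2_weighted (w₁ := b / B) (w₂ := c / B)
    (p₁ := t * B / b) (p₂ := (1 - t) * B / c) (by positivity) (by positivity) (by positivity)
    (by positivity) (by rw [← add_div, div_self hBpos.ne'])
  have hle := pow_le_one₀ (n := b + c) (by positivity)
    (amgm.trans (by linarith [weight_mul_le b h0, weight_mul_le c h1t]))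
  have hexp : ∀ r : ℕ, r / B * ((b + c : ℕ) : ℝ) = r := by
    intro r; push_cast; rw [← hB_def]; field_simp
  rw [mul_pow, ← rpow_mul_natCast (by positivity), ← rpow_mul_natCast (by positivity),
    hexp, hexp, rpow_natCast, rpow_natCast, div_pow, div_pow, mul_pow, mul_pow, div_mul_div_comm,
    div_le_one (mul_pos (by exact_mod_cast Nat.pow_self_pos) (by exact_mod_cast Nat.pow_self_pos))]
    at hle
  calc t ^ b * (1 - t) ^ c * B ^ (b + c) = t ^ b * B ^ b * ((1 - t) ^ c * B ^ c) := by ring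
    _ ≤ _ := hle

lemma beta_eq_integral {x y : ℝ} (hx : 0 < x) (hy : 0 < y) :
    beta x y = ∫ t in (0 : ℝ)..1, t ^ (x - 1) * (1 - t) ^ (y - 1) := by
  rw [beta_eq_betaIntegralReal x y hx hy, Complex.betaIntegral,
    intervalIntegral.integral_congr
      (g := fun t : ℝ => ((t ^ (x - 1) * (1 - t) ^ (y - 1) : ℝ) : ℂ)),
    intervalIntegral.integral_ofReal, Complex.ofReal_re]
  intro t ht
  rw [Set.uIcc_of_le zero_le_one] at ht
  simp [Complex.ofReal_cpow ht.1, Complex.ofReal_cpow (sub_nonneg.2 ht.2)]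

lemma intervalIntegrable_beta_integrand {x y : ℝ} (hx : 0 < x) (hy : 0 < y) :
    IntervalIntegrable (fun t : ℝ => t ^ (x - 1) * (1 - t) ^ (y - 1)) MeasureTheory.volume 0 1 :=
  intervalIntegral.intervalIntegrable_of_integral_ne_zero
    (beta_eq_integral hx hy ▸ (beta_pos hx hy).ne')

/-- `B(x + b, y + c) / B(x, y)` is the mean of `t ^ b (1 - t) ^ c` under the Beta(x, y) law, hence
at most the maximum `b ^ b c ^ c / (b + c) ^ (b + c)` of that function on `[0, 1]`. -/
lemma beta_add_natCast_mul_le {x y : ℝ} (hx : 0 < x) (hy : 0 < y) (b c : ℕ) :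
    beta (x + b) (y + c) * ((b : ℝ) + c) ^ (b + c)
      ≤ beta x y * ((b : ℝ) ^ b * (c : ℝ) ^ c) := by
  have hxb : 0 < x + b := by positivity
  have hyc : 0 < y + c := by positivity
  rw [beta_eq_integral hx hy, beta_eq_integral hxb hyc, ← intervalIntegral.integral_mul_const,
    ← intervalIntegral.integral_mul_const]
  refine intervalIntegral.integral_mono_on_of_le_Ioo zero_le_one
    ((intervalIntegrable_beta_integrand hxb hyc).mul_const _)
    ((intervalIntegrable_beta_integrand hx hy).mul_const _) fun t ⟨ht0, ht1⟩ => ?_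
  have h1t : 0 < 1 - t := sub_pos.2 ht1
  rw [add_sub_right_comm, add_sub_right_comm y, rpow_add_natCast ht0.ne',
    rpow_add_natCast h1t.ne']
  calc t ^ (x - 1) * t ^ b * ((1 - t) ^ (y - 1) * (1 - t) ^ c) * ((b : ℝ) + c) ^ (b + c)
      = t ^ (x - 1) * (1 - t) ^ (y - 1) * (t ^ b * (1 - t) ^ c * ((b : ℝ) + c) ^ (b + c)) := by
        ring
    _ ≤ _ := mul_le_mul_of_nonneg_left (pow_mul_one_sub_pow_mul_le ht0.le ht1.le b c)
        (by positivity)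

lemma pGam_pos {α : ℝ} (hα : 0 < α) (m : ℕ) : 0 < pGam α m :=
  div_pos (Gamma_pos_of_pos (by positivity)) (Gamma_pos_of_pos hα)

lemma pGam_add {α : ℝ} (hα : 0 < α) (m n : ℕ) :
    pGam α (m + n) = pGam α m * pGam (α + m) n := by
  have h : Gamma (m + α) ≠ 0 := (Gamma_pos_of_pos (by positivity)).ne'
  simp only [pGam, Nat.cast_add]
  rw [add_comm α, mul_comm, div_mul_div_cancel₀ h]
  ring_nf

lemma pGam_mul_pGam {x y : ℝ} (hx : 0 < x) (hy : 0 < y) (b c : ℕ) :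
    pGam x b * pGam y c = pGam (x + y) (b + c) * (beta (x + b) (y + c) / beta x y) := by
  have hΓx := Gamma_pos_of_pos hx
  have hΓy := Gamma_pos_of_pos hy
  have hΓxy := Gamma_pos_of_pos (add_pos hx hy)
  have hΓbc := Gamma_pos_of_pos (by positivity : 0 < x + b + (y + c))
  simp only [pGam, beta, Nat.cast_add]
  field_simp
  ring_nf

lemma pGam_mul_pGam_mul_le {x y : ℝ} (hx : 0 < x) (hy : 0 < y) (b c : ℕ) :
    pGam x b * pGam y c * ((b : ℝ) + c) ^ (b + c)
      ≤ pGam (x + y) (b + c) * ((b : ℝ) ^ b * (c : ℝ) ^ c) := by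
  have hB := beta_pos hx hy
  calc pGam x b * pGam y c * ((b : ℝ) + c) ^ (b + c)
      = pGam (x + y) (b + c) * (beta (x + b) (y + c) * ((b : ℝ) + c) ^ (b + c)) / beta x y := by
        rw [pGam_mul_pGam hx hy]; ring
    _ ≤ pGam (x + y) (b + c) * (beta x y * ((b : ℝ) ^ b * (c : ℝ) ^ c)) / beta x y := by
        exact div_le_div_of_nonneg_right (mul_le_mul_of_nonneg_left
          (beta_add_natCast_mul_le hx hy b c) (pGam_pos (add_pos hx hy) (b + c)).le) hB.le
    _ = pGam (x + y) (b + c) * ((b : ℝ) ^ b * (c : ℝ) ^ c) := by field_simp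

lemma prod_pGam_mul_le {ι : Type*} {s : Finset ι} (hs : s.Nonempty) {x : ι → ℝ}
    (hx : ∀ k ∈ s, 0 < x k) (b : ι → ℕ) :
    (∏ k ∈ s, pGam (x k) (b k)) * ((∑ k ∈ s, b k : ℕ) : ℝ) ^ (∑ k ∈ s, b k)
      ≤ pGam (∑ k ∈ s, x k) (∑ k ∈ s, b k) * ∏ k ∈ s, (b k : ℝ) ^ b k := by
  induction hs using Finset.Nonempty.cons_induction with
  | singleton a => simp
  | cons a s ha hs ih =>
    simp only [Finset.forall_mem_cons] at hx
    have hX : 0 < ∑ k ∈ s, x k := Finset.sum_pos (fun k hk => hx.2 k hk) hs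
    set B := ∑ k ∈ s, b k
    have hBB : (0 : ℝ) < (B : ℝ) ^ B := by exact_mod_cast Nat.pow_self_pos
    have hpa := pGam_pos hx.1 (b a)
    rw [Finset.prod_cons, Finset.prod_cons, Finset.sum_cons, Finset.sum_cons]
    refine le_of_mul_le_mul_right ?_ hBB
    calc pGam (x a) (b a) * (∏ k ∈ s, pGam (x k) (b k)) * ((b a + B : ℕ) : ℝ) ^ (b a + B)
            * B ^ B
        = pGam (x a) (b a) * ((b a : ℝ) + B) ^ (b a + B)
            * ((∏ k ∈ s, pGam (x k) (b k)) * B ^ B) := by push_cast; ring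
      _ ≤ pGam (x a) (b a) * ((b a : ℝ) + B) ^ (b a + B)
            * (pGam (∑ k ∈ s, x k) B * ∏ k ∈ s, (b k : ℝ) ^ b k) :=
          mul_le_mul_of_nonneg_left (ih hx.2) (by positivity)
      _ = pGam (x a) (b a) * pGam (∑ k ∈ s, x k) B * ((b a : ℝ) + B) ^ (b a + B)
            * ∏ k ∈ s, (b k : ℝ) ^ b k := by ring
      _ ≤ pGam (x a + ∑ k ∈ s, x k) (b a + B) * ((b a : ℝ) ^ b a * (B : ℝ) ^ B)
            * ∏ k ∈ s, (b k : ℝ) ^ b k :=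
          mul_le_mul_of_nonneg_right (pGam_mul_pGam_mul_le hx.1 hX (b a) B)
            (prod_nonneg fun k _ => by positivity)
      _ = _ := by ring

lemma ML_eq_sum_mul_log_sub (q : ℕ) (m : ℕ → ℕ) :
    ML q m = ∑ k ∈ range q, (m k : ℝ) * log (m k)
      - ((∑ k ∈ range q, m k : ℕ) : ℝ) * log (∑ k ∈ range q, m k : ℕ) := by
  rw [ML, Nat.cast_sum, Finset.sum_mul, ← Finset.sum_sub_distrib]
  refine Finset.sum_congr rfl fun k hk => ?_
  rcases Nat.eq_zero_or_pos (m k) with h | h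
  · simp [h]
  have hN : 0 < ∑ l ∈ range q, m l := h.trans_le (Finset.single_le_sum (by simp) hk)
  rw [log_div (by positivity) (by rw [← Nat.cast_sum]; positivity), mul_sub]

lemma sum_log_pGam_sub_log_pGam_le_ML {q : ℕ} (hq : 1 ≤ q) {x : ℕ → ℝ}
    (hx : ∀ k ∈ range q, 0 < x k) (b : ℕ → ℕ) :
    ∑ k ∈ range q, log (pGam (x k) (b k))
        - log (pGam (∑ k ∈ range q, x k) (∑ k ∈ range q, b k)) ≤ ML q b := by
  have hs : (range q).Nonempty := nonempty_range_iff.2 (by omega)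
  have hP : 0 < ∏ k ∈ range q, pGam (x k) (b k) := prod_pos fun k hk => pGam_pos (hx k hk) _
  have hb : ∀ k, (0 : ℝ) < (b k : ℝ) ^ b k := fun k => by exact_mod_cast Nat.pow_self_pos
  have hM : 0 < ∏ k ∈ range q, (b k : ℝ) ^ b k := prod_pos fun k _ => hb k
  have hBB : (0 : ℝ) < ((∑ k ∈ range q, b k : ℕ) : ℝ) ^ (∑ k ∈ range q, b k) := by
    exact_mod_cast Nat.pow_self_pos
  have h := log_le_log (mul_pos hP hBB) (prod_pGam_mul_le hs hx b)
  rw [log_mul hP.ne' hBB.ne', log_mul (pGam_pos (sum_pos hx hs) _).ne' hM.ne',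
    log_prod (fun k hk => (pGam_pos (hx k hk) _).ne'), log_prod (fun k _ => (hb k).ne'),
    log_pow] at h
  simp only [log_pow] at h
  rw [ML_eq_sum_mul_log_sub]
  linarith

lemma llB_add_le {q : ℕ} (hq : 1 ≤ q) {α : ℝ} (hα : 0 < α) (a b : ℕ → ℕ) :
    llB q α (a + b) ≤ llB q α a + ML q b := by
  have hαq : 0 < α / q := by positivity
  have hx : ∀ k ∈ range q, 0 < α / q + a k := fun k _ => by positivity
  have hsum : ∑ k ∈ range q, (α / q + a k) = α + (∑ k ∈ range q, a k : ℕ) := by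
    rw [sum_add_distrib, sum_const, card_range, nsmul_eq_mul, mul_div_cancel₀ _ (by positivity)]
    push_cast; rfl
  have key := sum_log_pGam_sub_log_pGam_le_ML hq hx b
  rw [hsum] at key
  simp only [llB, Pi.add_apply, sum_add_distrib, pGam_add hα, pGam_add hαq]
  rw [log_mul (pGam_pos hα _).ne' (pGam_pos (by positivity) _).ne',
    sum_congr rfl fun k hk => log_mul (pGam_pos hαq (a k)).ne' (pGam_pos (hx k hk) (b k)).ne',
    sum_add_distrib]
  linarith

lemma llB_add_sum_le {q : ℕ} (hq : 1 ≤ q) {α : ℝ} (hα : 0 < α) (a : ℕ → ℕ)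
    {ι : Type*} (s : Finset ι) (n : ι → ℕ → ℕ) :
    llB q α (a + ∑ t ∈ s, n t) ≤ llB q α a + ∑ t ∈ s, ML q (n t) := by
  classical
  induction s using Finset.induction_on with
  | empty => simp
  | insert t s ht ih =>
    rw [sum_insert ht, sum_insert ht, add_comm (n t), ← add_assoc]
    linarith [llB_add_le hq hα (a + ∑ t ∈ s, n t) (n t)]

theorem stmt_13_general (q : ℕ) (hq : 1 ≤ q) (α : ℝ) (hα : 0 < α)
    (w : ℕ) (n : ℕ → ℕ → ℕ)
    (t' : ℕ) (ht' : t' ∈ Finset.range w) :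
    llB q α (fun k => ∑ t ∈ Finset.range w, n t k)
      ≤ llB q α (n t') + ∑ t ∈ (Finset.range w).erase t', ML q (n t) := by
  have hsplit : (fun k => ∑ t ∈ Finset.range w, n t k)
      = n t' + ∑ t ∈ (Finset.range w).erase t', n t := by
    ext k
    rw [Pi.add_apply, Finset.sum_apply]
    exact (add_sum_erase _ (fun t => n t k) ht').symm
  rw [hsplit]
  exact llB_add_sum_le hq hα _ _ n

theorem stmt_13 (q : ℕ) (hq : 1 ≤ q) (α : ℝ) (hα : 0 < α)
    (w : ℕ) (hw : 0 < w) (n : ℕ → ℕ → ℕ)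
    (hpos : ∀ t ∈ Finset.range w, 0 < ∑ k ∈ Finset.range q, n t k)
    (t' : ℕ) (ht' : t' ∈ Finset.range w) :
    llB q α (fun k => ∑ t ∈ Finset.range w, n t k)
      ≤ llB q α (n t') + ∑ t ∈ (Finset.range w).erase t', ML q (n t) :=
  stmt_13_general q hq α hα w n t' ht'
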